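/- In the logistic regression model, every minimizer θ* of F over R^d satisfies τ ‖θ*‖² ≤ ln 4. -/

import Mathlib

open Matrix Real
open scoped BigOperators

noncomputable section

/-- `‖X_i‖`, the Euclidean norm of the covariate vector. -/
def nrmX {d : ℕ} (Xi : Fin d → ℝ) : ℝ := Real.sqrt (Xi ⬝ᵥ Xi)

/-- `𝗌_i(z) := z X_i / (‖X_i‖ σ²)`. -/
def sStat {d : ℕ} (Xi : Fin d → ℝ) (σ : ℝ) (z : ℝ) : Fin d → ℝ :=
  (z / (nrmX Xi * σ ^ 2)) • Xi

/-- `Ω := ((1/(σ²n)) ∑_i X_i X_iᵀ/‖X_i‖² + 2τ I_d)⁻¹`. -/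
def OmegaMat (d n : ℕ) (X : Fin n → Fin d → ℝ) (σ τ : ℝ) : Matrix (Fin d) (Fin d) ℝ :=
  ((σ ^ 2 * (n : ℝ))⁻¹ • ∑ i, (X i ⬝ᵥ X i)⁻¹ • vecMulVec (X i) (X i)
      + (2 * τ) • (1 : Matrix (Fin d) (Fin d) ℝ))⁻¹

/-- `R(θ) := (1/2) θᵀ Ω⁻¹ θ`. -/
def Rpen (d n : ℕ) (X : Fin n → Fin d → ℝ) (σ τ : ℝ) (θ : Fin d → ℝ) : ℝ :=
  (1 / 2) * (θ ⬝ᵥ (OmegaMat d n X σ τ)⁻¹.mulVec θ)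

/-- The objective `F`: normalized negative penalized log-likelihood of the logistic
regression model with Gaussian predictors, written with one-dimensional integrals. -/
def Fobj (d n : ℕ) (X : Fin n → Fin d → ℝ) (y : Fin n → ℝ) (σ τ : ℝ) (θ : Fin d → ℝ) : ℝ :=
  -(n : ℝ)⁻¹ * ∑ i, Real.log (∫ z : ℝ,
      (1 + Real.exp (-(y i * nrmX (X i) * z)))⁻¹ * Real.exp (sStat (X i) σ z ⬝ᵥ θ)
        * Real.exp (-z ^ 2 / (2 * σ ^ 2)))
    + Rpen d n X σ τ θ

/-!
Tilting a Gaussian by `exp (a z)` multiplies its mass by `exp (σ² a² / 2)`, and this factor is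
exactly the data term of the penalty `R` at `θ`. Since the logistic factor is at most `1`, each
sample term `-log ∫ …` of `F` at `θ` is therefore at least `-log √(2πσ²)` minus that data term.
At `θ = 0` the identity `sigmoid t + sigmoid (-t) = 1` and the symmetry of the Gaussian make each
integral exactly half the Gaussian mass. Together, `F θ ≥ F 0 - log 2 + τ ‖θ‖²`, so a minimizer
has `τ ‖θ*‖² ≤ log 2 ≤ log 4`.
-/

open MeasureTheory

lemma exp_mul_mul_exp_neg_mul_sq {b : ℝ} (hb : b ≠ 0) (a z : ℝ) :
    exp (a * z) * exp (-b * z ^ 2) = exp (-b * (z - a / (2 * b)) ^ 2) * exp (a ^ 2 / (4 * b)) := by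
  rw [← exp_add, ← exp_add]
  congr 1
  field_simp
  ring

lemma integrable_exp_mul_mul_exp_neg_mul_sq {b : ℝ} (hb : 0 < b) (a : ℝ) :
    Integrable fun z : ℝ ↦ exp (a * z) * exp (-b * z ^ 2) := by
  simp_rw [exp_mul_mul_exp_neg_mul_sq hb.ne']
  exact ((integrable_exp_neg_mul_sq hb).comp_sub_right _).mul_const _

lemma integral_exp_mul_mul_exp_neg_mul_sq {b : ℝ} (hb : b ≠ 0) (a : ℝ) :
    ∫ z : ℝ, exp (a * z) * exp (-b * z ^ 2) = √(π / b) * exp (a ^ 2 / (4 * b)) := by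
  simp_rw [exp_mul_mul_exp_neg_mul_sq hb, integral_mul_const,
    integral_sub_right_eq_self (fun z ↦ exp (-b * z ^ 2)), integral_gaussian]

lemma integrable_sigmoid_mul {g : ℝ → ℝ} (hg : Integrable g) (k : ℝ) :
    Integrable fun z ↦ sigmoid (k * z) * g z :=
  hg.bdd_mul (c := 1) (continuous_sigmoid.comp (continuous_const_mul k)).aestronglyMeasurable
    (.of_forall fun z ↦ by
      rw [norm_of_nonneg (sigmoid_nonneg _)]; exact sigmoid_le_one _)

lemma integral_sigmoid_mul_le {g : ℝ → ℝ} (hg : Integrable g) (hg0 : 0 ≤ g) (k : ℝ) :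
    ∫ z, sigmoid (k * z) * g z ≤ ∫ z, g z :=
  integral_mono (integrable_sigmoid_mul hg k) hg fun z ↦
    mul_le_of_le_one_left (hg0 z) (sigmoid_le_one _)

lemma integral_sigmoid_mul_of_even {g : ℝ → ℝ} (hg : Integrable g) (heven : ∀ z, g (-z) = g z)
    (k : ℝ) : ∫ z, sigmoid (k * z) * g z = (∫ z, g z) / 2 := by
  have hflip : ∫ z, sigmoid (k * z) * g z = ∫ z, (1 - sigmoid (k * z)) * g z := by
    rw [← integral_neg_eq_self]
    simp_rw [heven, mul_neg, sigmoid_neg]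
  have hsum : (∫ z, sigmoid (k * z) * g z) + ∫ z, (1 - sigmoid (k * z)) * g z = ∫ z, g z := by
    rw [← integral_add (integrable_sigmoid_mul hg k)]
    · simp_rw [← add_mul, add_sub_cancel, one_mul]
    · simp_rw [sub_mul, one_mul]
      exact hg.sub (integrable_sigmoid_mul hg k)
  linarith

lemma integral_sigmoid_mul_exp_neg_mul_sq {b : ℝ} (hb : 0 < b) (k : ℝ) :
    ∫ z, sigmoid (k * z) * exp (-b * z ^ 2) = √(π / b) / 2 := by
  rw [integral_sigmoid_mul_of_even (integrable_exp_neg_mul_sq hb) (fun z ↦ by rw [neg_sq]),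
    integral_gaussian]

lemma log_integral_sigmoid_mul_exp_mul_exp_neg_mul_sq_le {b : ℝ} (hb : 0 < b) (k a : ℝ) :
    log (∫ z, sigmoid (k * z) * (exp (a * z) * exp (-b * z ^ 2)))
      ≤ log (∫ z, sigmoid (k * z) * exp (-b * z ^ 2)) + log 2 + a ^ 2 / (4 * b) := by
  have hg := integrable_exp_mul_mul_exp_neg_mul_sq hb a
  have hpos : 0 < ∫ z, sigmoid (k * z) * (exp (a * z) * exp (-b * z ^ 2)) :=
    integral_pos_of_integrable_nonneg_nonzero (x := 0) (by fun_prop)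
      (integrable_sigmoid_mul hg k) (fun z ↦ mul_nonneg (sigmoid_nonneg _) (by positivity))
      (mul_pos (sigmoid_pos _) (by positivity)).ne'
  have hle := (integral_sigmoid_mul_le hg (fun z ↦ by positivity) k).trans_eq
    (integral_exp_mul_mul_exp_neg_mul_sq hb.ne' a)
  have hsqrt : 0 < √(π / b) := by positivity
  calc _ ≤ log (√(π / b) * exp (a ^ 2 / (4 * b))) := log_le_log hpos hle
    _ = _ := by
      rw [integral_sigmoid_mul_exp_neg_mul_sq hb, log_mul hsqrt.ne' (exp_ne_zero _), log_exp,
        log_div hsqrt.ne' two_ne_zero]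
      ring

lemma dotProduct_self_nonneg {ι R : Type*} [Fintype ι] [Ring R] [LinearOrder R]
    [IsStrictOrderedRing R] (v : ι → R) : 0 ≤ v ⬝ᵥ v :=
  Finset.sum_nonneg fun i _ ↦ mul_self_nonneg (v i)

lemma isUnit_det_of_dotProduct_mulVec_pos {ι R : Type*} [Fintype ι] [DecidableEq ι] [Field R]
    [PartialOrder R] {M : Matrix ι ι R} (hM : ∀ x ≠ 0, 0 < x ⬝ᵥ M *ᵥ x) : IsUnit M.det := by
  rw [← isUnit_iff_isUnit_det, ← mulVec_injective_iff_isUnit]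
  intro u v huv
  by_contra hne
  have hpos := hM (u - v) (sub_ne_zero.mpr hne)
  rw [mulVec_sub, huv, sub_self, dotProduct_zero] at hpos
  exact hpos.false

lemma nrmX_sq {d : ℕ} (x : Fin d → ℝ) : nrmX x ^ 2 = x ⬝ᵥ x :=
  sq_sqrt (dotProduct_self_nonneg x)

lemma sStat_dotProduct {d : ℕ} (x : Fin d → ℝ) (σ z : ℝ) (θ : Fin d → ℝ) :
    sStat x σ z ⬝ᵥ θ = (x ⬝ᵥ θ) / (nrmX x * σ ^ 2) * z := by
  rw [sStat, smul_dotProduct, smul_eq_mul]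
  ring

section Penalty

variable {d n : ℕ} (X : Fin n → Fin d → ℝ) (σ τ : ℝ)

def precisionMat : Matrix (Fin d) (Fin d) ℝ :=
  (σ ^ 2 * (n : ℝ))⁻¹ • ∑ i, (X i ⬝ᵥ X i)⁻¹ • vecMulVec (X i) (X i)
    + (2 * τ) • (1 : Matrix (Fin d) (Fin d) ℝ)

lemma dotProduct_mulVec_precisionMat (x : Fin d → ℝ) :
    x ⬝ᵥ precisionMat X σ τ *ᵥ x
      = (σ ^ 2 * (n : ℝ))⁻¹ * ∑ i, (X i ⬝ᵥ X i)⁻¹ * (X i ⬝ᵥ x) ^ 2 + 2 * τ * (x ⬝ᵥ x) := by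
  simp only [precisionMat, add_mulVec, smul_mulVec, one_mulVec, sum_mulVec, vecMulVec_mulVec,
    dotProduct_add, dotProduct_smul, dotProduct_sum, smul_eq_mul, Finset.mul_sum]
  congr 1
  refine Finset.sum_congr rfl fun i _ ↦ ?_
  rw [op_smul_eq_mul, dotProduct_comm x]
  ring

variable {τ}

lemma OmegaMat_inv (hτ : 0 < τ) : (OmegaMat d n X σ τ)⁻¹ = precisionMat X σ τ := by
  refine nonsing_inv_nonsing_inv _ (isUnit_det_of_dotProduct_mulVec_pos fun x hx ↦ ?_)
  rw [← precisionMat, dotProduct_mulVec_precisionMat]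
  have hsum : 0 ≤ (σ ^ 2 * (n : ℝ))⁻¹ * ∑ i, (X i ⬝ᵥ X i)⁻¹ * (X i ⬝ᵥ x) ^ 2 := by
    refine mul_nonneg (by positivity) (Finset.sum_nonneg fun i _ ↦ ?_)
    exact mul_nonneg (inv_nonneg.mpr (dotProduct_self_nonneg _)) (sq_nonneg _)
  have hx : 0 < x ⬝ᵥ x := (dotProduct_self_nonneg x).lt_of_ne' (dotProduct_self_eq_zero.not.mpr hx)
  nlinarith

lemma Rpen_eq (hτ : 0 < τ) (θ : Fin d → ℝ) :
    Rpen d n X σ τ θ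
      = (n : ℝ)⁻¹ * ∑ i, (X i ⬝ᵥ θ) ^ 2 / (2 * σ ^ 2 * (X i ⬝ᵥ X i)) + τ * (θ ⬝ᵥ θ) := by
  rw [Rpen, OmegaMat_inv X σ hτ, dotProduct_mulVec_precisionMat, Finset.mul_sum, Finset.mul_sum,
    mul_add, Finset.mul_sum]
  congr 1
  · exact Finset.sum_congr rfl fun i _ ↦ by ring
  · ring

lemma Rpen_zero : Rpen d n X σ τ 0 = 0 := by
  simp [Rpen]

end Penalty

lemma log_integral_sample_le {d : ℕ} {σ : ℝ} (hσ : σ ≠ 0) (x : Fin d → ℝ) (k : ℝ)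
    (θ : Fin d → ℝ) :
    log (∫ z, (1 + exp (-(k * z)))⁻¹ * exp (sStat x σ z ⬝ᵥ θ) * exp (-z ^ 2 / (2 * σ ^ 2)))
      ≤ log (∫ z, (1 + exp (-(k * z)))⁻¹ * exp (sStat x σ z ⬝ᵥ 0) * exp (-z ^ 2 / (2 * σ ^ 2)))
        + log 2 + (x ⬝ᵥ θ) ^ 2 / (2 * σ ^ 2 * (x ⬝ᵥ x)) := by
  set a := (x ⬝ᵥ θ) / (nrmX x * σ ^ 2)
  set b := (2 * σ ^ 2)⁻¹
  have hgauss : ∀ z : ℝ, exp (-z ^ 2 / (2 * σ ^ 2)) = exp (-b * z ^ 2) := fun z ↦ by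
    congr 1; ring
  have hθ : ∫ z, (1 + exp (-(k * z)))⁻¹ * exp (sStat x σ z ⬝ᵥ θ) * exp (-z ^ 2 / (2 * σ ^ 2))
      = ∫ z, sigmoid (k * z) * (exp (a * z) * exp (-b * z ^ 2)) := by
    congr 1 with z
    rw [sStat_dotProduct, hgauss, mul_assoc, sigmoid_def]
  have h0 : ∫ z, (1 + exp (-(k * z)))⁻¹ * exp (sStat x σ z ⬝ᵥ 0) * exp (-z ^ 2 / (2 * σ ^ 2))
      = ∫ z, sigmoid (k * z) * exp (-b * z ^ 2) := by
    congr 1 with z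
    rw [dotProduct_zero, exp_zero, mul_one, hgauss, sigmoid_def]
  have hquad : a ^ 2 / (4 * b) = (x ⬝ᵥ θ) ^ 2 / (2 * σ ^ 2 * (x ⬝ᵥ x)) := by
    rw [← nrmX_sq]
    simp only [a, b]
    field_simp
    ring
  rw [hθ, h0, ← hquad]
  exact log_integral_sigmoid_mul_exp_mul_exp_neg_mul_sq_le (by positivity) k a

lemma Fobj_zero_sub_log_two_add_le {d n : ℕ} (X : Fin n → Fin d → ℝ) (y : Fin n → ℝ) {σ τ : ℝ}
    (hσ : σ ≠ 0) (hτ : 0 < τ) (θ : Fin d → ℝ) :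
    Fobj d n X y σ τ 0 - log 2 + τ * (θ ⬝ᵥ θ) ≤ Fobj d n X y σ τ θ := by
  have hsum := Finset.sum_le_sum fun i (_ : i ∈ Finset.univ) ↦
    log_integral_sample_le hσ (X i) (y i * nrmX (X i)) θ
  rw [Finset.sum_add_distrib, Finset.sum_add_distrib, Finset.sum_const, Finset.card_univ,
    Fintype.card_fin, nsmul_eq_mul] at hsum
  have hmean := mul_le_mul_of_nonneg_left hsum (inv_nonneg.mpr (Nat.cast_nonneg n))
  -- only `≤`: for `n = 0` the junk value `(0 : ℝ)⁻¹ = 0` makes the factor `0`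
  have hlog2 : (n : ℝ)⁻¹ * n * log 2 ≤ log 2 :=
    mul_le_of_le_one_left (log_nonneg one_le_two) (inv_mul_le_one_of_le₀ le_rfl n.cast_nonneg)
  rw [Fobj, Fobj, Rpen_zero, Rpen_eq X σ hτ]
  linarith

theorem minimizer_norm_bound_general
    (d n : ℕ) (X : Fin n → Fin d → ℝ)
    (y : Fin n → ℝ)
    (σ τ : ℝ) (hσ : 0 < σ) (hτ : 0 < τ)
    (θstar : Fin d → ℝ) (hmin : ∀ θ, Fobj d n X y σ τ θstar ≤ Fobj d n X y σ τ θ) :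
    τ * (θstar ⬝ᵥ θstar) ≤ Real.log 4 := by
  have hgap := Fobj_zero_sub_log_two_add_le X y hσ.ne' hτ θstar
  have hlog : log 2 ≤ log 4 := log_le_log two_pos (by norm_num)
  linarith [hmin 0]

/-- In the logistic regression model, every minimizer `θ*` of `F` over `ℝ^d`
satisfies `τ ‖θ*‖² ≤ ln 4`. -/
theorem minimizer_norm_bound
    (d n : ℕ) (hn : 0 < n) (X : Fin n → Fin d → ℝ) (hX : ∀ i, X i ≠ 0)
    (y : Fin n → ℝ) (hy : ∀ i, y i = 1 ∨ y i = -1)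
    (σ τ : ℝ) (hσ : 0 < σ) (hτ : 0 < τ)
    (θstar : Fin d → ℝ) (hmin : ∀ θ, Fobj d n X y σ τ θstar ≤ Fobj d n X y σ τ θ) :
    τ * (θstar ⬝ᵥ θstar) ≤ Real.log 4 :=
  minimizer_norm_bound_general d n X y σ τ hσ hτ θstar hmin
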